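/- For every real x with 0 < x < 1, ∑_{n=1}^∞ (H_n)² x^n / n² = Li₂(x)²/2 − 2 Li₄(1−x) + Li₄(x) − Li₂(1−x) · log²(1−x) + 2 Li₃(1−x) · log(1−x) − (1/3) log x · log³(1−x) + π⁴/45. -/

import Mathlib

open scoped BigOperators

/-- Harmonic number `H_n = ∑_{j=1}^n 1/j`. -/
noncomputable def H (n : ℕ) : ℝ := ∑ j ∈ Finset.Icc 1 n, 1 / (j : ℝ)

/-- Polylogarithm `Li_m(x) = ∑_{k=1}^∞ x^k/k^m`. -/
noncomputable def Li (m : ℕ) (x : ℝ) : ℝ := ∑' k : ℕ, x ^ (k + 1) / ((k : ℝ) + 1) ^ m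

/-!
Every series involved is a power series `∑ aₙ x^(n+1)` with polynomially bounded coefficients,
and dividing the coefficients by `n + 1` integrates the series against `dx / x`. Multiplying by
`1 - x` gives `∑ H_n xⁿ = -log(1-x)/(1-x)`; from there one climbs to `∑ H_n xⁿ/n`, to
`∑ H_n² xⁿ` (multiplying by `1 - x` again, as `H_n² - H_{n-1}² = 2H_n/n - 1/n²`), to
`∑ H_n² xⁿ/n` and finally to `∑ H_n² xⁿ/n²`. Each closed form is checked by differentiating it
on `(0, 1)` and comparing limits at `0⁺`; in the last step the constant comes from
`Li₄(1) = ζ(4) = π⁴/90`.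
-/

open Real Filter Set Topology

lemma H_zero : H 0 = 0 := by simp [H]

lemma H_succ (n : ℕ) : H (n + 1) = H n + 1 / ((n : ℝ) + 1) := by
  rw [H, Finset.sum_Icc_succ_top (by omega), ← H]
  push_cast; ring

lemma H_nonneg (n : ℕ) : 0 ≤ H n :=
  Finset.sum_nonneg fun j _ => by positivity

lemma H_le_self (n : ℕ) : H n ≤ n := by
  induction n with
  | zero => simp [H_zero]
  | succ n ih =>
    have : 1 / ((n : ℝ) + 1) ≤ 1 :=
      div_le_one_of_le₀ (by linarith [n.cast_nonneg (α := ℝ)]) (by positivity)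
    rw [H_succ]; push_cast; linarith

lemma summable_add_one_pow_mul_geometric (k : ℕ) {r : ℝ} (hr : |r| < 1) :
    Summable fun n : ℕ => ((n : ℝ) + 1) ^ k * r ^ n := by
  have hr' : ‖r‖ < 1 := hr
  simp_rw [add_pow, one_pow, mul_one, Finset.sum_mul]
  exact summable_sum fun m _ => ((summable_pow_mul_geometric_of_norm_lt_one m hr').mul_left
    (k.choose m : ℝ)).congr fun n => by ring

noncomputable def pseries (a : ℕ → ℝ) (x : ℝ) : ℝ := ∑' n, a n * x ^ (n + 1)

lemma pseries_eq_mul_tsum (a : ℕ → ℝ) (x : ℝ) : pseries a x = x * ∑' n, a n * x ^ n := by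
  rw [pseries, ← tsum_mul_left]
  exact tsum_congr fun n => by ring

lemma pseries_zero (a : ℕ → ℝ) : pseries a 0 = 0 := by simp [pseries_eq_mul_tsum]

section pseries

variable {a : ℕ → ℝ} {k : ℕ}

lemma summable_mul_pow (ha : ∀ n, |a n| ≤ ((n : ℝ) + 1) ^ k) {x : ℝ} (hx : |x| < 1) :
    Summable fun n => a n * x ^ n :=
  .of_norm_bounded (summable_add_one_pow_mul_geometric k (by rwa [abs_abs])) fun n => by
    rw [norm_mul, norm_pow, Real.norm_eq_abs, Real.norm_eq_abs]
    gcongr; exact ha n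

lemma summable_mul_pow_succ (ha : ∀ n, |a n| ≤ ((n : ℝ) + 1) ^ k) {x : ℝ} (hx : |x| < 1) :
    Summable fun n => a n * x ^ (n + 1) :=
  ((summable_mul_pow ha hx).mul_left x).congr fun n => by ring

lemma hasDerivAt_pseries_div_add_one (ha : ∀ n, |a n| ≤ ((n : ℝ) + 1) ^ k) {x : ℝ}
    (hx : |x| < 1) :
    HasDerivAt (pseries fun n => a n / ((n : ℝ) + 1)) (∑' n, a n * x ^ n) x := by
  obtain ⟨r, hxr, hr1⟩ := exists_between hx
  have hr : |r| < 1 := by rwa [abs_of_pos ((abs_nonneg x).trans_lt hxr)]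
  show HasDerivAt (fun y => ∑' n, a n / ((n : ℝ) + 1) * y ^ (n + 1)) _ x
  refine hasDerivAt_tsum_of_isPreconnected (g' := fun n y => a n * y ^ n)
    (summable_mul_pow ha hr |>.norm) isOpen_Ioo isPreconnected_Ioo (fun n y _ => ?_)
    (fun n y hy => ?_) (y₀ := (0 : ℝ)) ⟨by linarith [abs_nonneg x], by linarith [abs_nonneg x]⟩
    (by simp [summable_zero]) (abs_lt.mp hxr)
  · refine ((hasDerivAt_pow (n + 1) y).const_mul (a n / ((n : ℝ) + 1))).congr_deriv ?_
    rw [Nat.add_sub_cancel]; push_cast; field_simp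
  · rw [norm_mul, norm_mul, norm_pow, norm_pow]
    gcongr
    exact (abs_lt.mpr hy).le.trans (le_abs_self r)

lemma hasDerivAt_pseries_div_add_one_of_ne_zero (ha : ∀ n, |a n| ≤ ((n : ℝ) + 1) ^ k) {x : ℝ}
    (hx : |x| < 1) (hx0 : x ≠ 0) :
    HasDerivAt (pseries fun n => a n / ((n : ℝ) + 1)) (pseries a x / x) x := by
  rw [pseries_eq_mul_tsum, mul_div_cancel_left₀ _ hx0]
  exact hasDerivAt_pseries_div_add_one ha hx

lemma tendsto_pseries_zero (ha : ∀ n, |a n| ≤ ((n : ℝ) + 1) ^ k) :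
    Tendsto (pseries a) (𝓝 0) (𝓝 0) := by
  -- `pseries a` is the termwise antiderivative of `∑ (n + 1) aₙ xⁿ`, hence continuous at `0`.
  have hb : ∀ n : ℕ, |((n : ℝ) + 1) * a n| ≤ ((n : ℝ) + 1) ^ (k + 1) := fun n => by
    rw [abs_mul, abs_of_pos (by positivity), pow_succ']
    exact mul_le_mul_of_nonneg_left (ha n) (by positivity)
  have h := (hasDerivAt_pseries_div_add_one hb (x := 0) (by simp)).continuousAt.tendsto
  have e : (pseries fun n => ((n : ℝ) + 1) * a n / ((n : ℝ) + 1)) = pseries a := by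
    congr 1; ext n; field_simp
  rwa [e, pseries_zero] at h

lemma one_sub_mul_pseries {f : ℕ → ℝ} (hf0 : f 0 = 0) (hf : ∀ n, |f n| ≤ ((n : ℝ) + 1) ^ k)
    {x : ℝ} (hx : |x| < 1) :
    (1 - x) * pseries (fun n => f (n + 1)) x = pseries (fun n => f (n + 1) - f n) x := by
  have hs := summable_mul_pow hf hx
  have hshift : pseries (fun n => f n) x = x * pseries (fun n => f (n + 1)) x := by
    rw [pseries_eq_mul_tsum, hs.tsum_eq_zero_add, hf0, zero_mul, zero_add]
    rfl
  have hs₁ : Summable fun n => f (n + 1) * x ^ (n + 1) := (summable_nat_add_iff 1).mpr hs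
  have hs₀ := summable_mul_pow_succ hf hx
  rw [sub_mul, one_mul, ← hshift, pseries, pseries, pseries, ← hs₁.tsum_sub hs₀]
  exact tsum_congr fun n => by ring

end pseries

lemma eqOn_Ioo_of_hasDerivAt_of_tendsto {f g f' : ℝ → ℝ} {a b L : ℝ}
    (hf : ∀ y ∈ Ioo a b, HasDerivAt f (f' y) y) (hg : ∀ y ∈ Ioo a b, HasDerivAt g (f' y) y)
    (hfa : Tendsto f (𝓝[>] a) (𝓝 L)) (hga : Tendsto g (𝓝[>] a) (𝓝 L)) :
    EqOn f g (Ioo a b) := by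
  intro x hx
  have hd : ∀ y ∈ Ioo a b, HasDerivAt (fun y => f y - g y) 0 y := fun y hy =>
    ((hf y hy).sub (hg y hy)).congr_deriv (sub_self _)
  obtain ⟨c, hc⟩ := isOpen_Ioo.exists_is_const_of_deriv_eq_zero isPreconnected_Ioo
    (fun y hy => (hd y hy).differentiableAt.differentiableWithinAt)
    (fun y hy => (hd y hy).deriv)
  have hc' : Tendsto (fun y => f y - g y) (𝓝[>] a) (𝓝 c) :=
    tendsto_const_nhds.congr' <| eventually_of_mem (Ioo_mem_nhdsGT (hx.1.trans hx.2))
      fun y hy => (hc y hy).symm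
  have h0 : c = 0 := tendsto_nhds_unique hc' (by simpa using hfa.sub hga)
  simpa [h0, sub_eq_zero] using hc x hx

lemma abs_lt_one_of_mem_Ioo {y : ℝ} (hy : y ∈ Ioo 0 1) : |y| < 1 :=
  abs_lt.mpr ⟨by linarith [hy.1], hy.2⟩

lemma tendsto_log_one_sub : Tendsto (fun x => log (1 - x)) (𝓝 0) (𝓝 0) := by
  simpa using ((continuousAt_const.sub continuousAt_id).log
    (by norm_num : (1 : ℝ) - 0 ≠ 0)).tendsto

lemma hasDerivAt_log_one_sub {y : ℝ} (hy : y ≠ 1) :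
    HasDerivAt (fun x => log (1 - x)) (-1 / (1 - y)) y := by
  simpa using ((hasDerivAt_id y).const_sub 1).log (sub_ne_zero.mpr hy.symm : (1 : ℝ) - y ≠ 0)

lemma tendsto_log_mul_log_one_sub_pow_succ (n : ℕ) :
    Tendsto (fun x => log x * log (1 - x) ^ (n + 1)) (𝓝[>] 0) (𝓝 0) := by
  -- `log x · log (1 - x) ^ (n + 1) = (x log x) · (log (1 - x) / x) · log (1 - x) ^ n`
  have hxlog : Tendsto (fun x => x * log x) (𝓝[>] 0) (𝓝 0) := by
    simpa using continuous_mul_log.continuousAt.tendsto.mono_left (nhdsWithin_le_nhds (a := 0))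
  have hslope : Tendsto (fun x => x⁻¹ * log (1 - x)) (𝓝[>] 0) (𝓝 (-1)) := by
    simpa using (hasDerivAt_log_one_sub (y := 0) (by norm_num)).tendsto_slope_zero_right
  have hpow := (tendsto_log_one_sub.pow n).mono_left (nhdsWithin_le_nhds (s := Ioi 0))
  have h := (hxlog.mul hslope).mul hpow
  rw [zero_mul, zero_mul] at h
  refine h.congr' ?_
  filter_upwards [self_mem_nhdsWithin] with x hx
  field_simp [(ne_of_gt (mem_Ioi.mp hx))]
  ring

lemma Li_eq_pseries (m : ℕ) : Li m = pseries fun n => 1 / ((n : ℝ) + 1) ^ m :=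
  funext fun x => tsum_congr fun n => by ring

lemma abs_one_div_add_one_pow_le (m n : ℕ) : |1 / ((n : ℝ) + 1) ^ m| ≤ ((n : ℝ) + 1) ^ 0 := by
  rw [pow_zero, abs_of_pos (by positivity)]
  exact div_le_one_of_le₀ (one_le_pow₀ (by linarith [n.cast_nonneg (α := ℝ)])) (by positivity)

lemma Li_one {x : ℝ} (hx : |x| < 1) : Li 1 x = -log (1 - x) := by
  simpa only [Li, pow_one] using (Real.hasSum_pow_div_log_of_abs_lt_one hx).tsum_eq

lemma hasDerivAt_Li (m : ℕ) {x : ℝ} (hx : |x| < 1) (hx0 : x ≠ 0) :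
    HasDerivAt (Li (m + 1)) (Li m x / x) x := by
  have e : Li (m + 1) = pseries fun n => 1 / ((n : ℝ) + 1) ^ m / ((n : ℝ) + 1) := by
    rw [Li_eq_pseries]; congr 1; ext n; rw [pow_succ, div_div]
  rw [e, Li_eq_pseries]
  exact hasDerivAt_pseries_div_add_one_of_ne_zero (abs_one_div_add_one_pow_le m) hx hx0

lemma hasDerivAt_Li_one_sub (m : ℕ) {y : ℝ} (hy : y ∈ Ioo 0 1) :
    HasDerivAt (fun x => Li (m + 1) (1 - x)) (-(Li m (1 - y) / (1 - y))) y := by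
  have h1y : |1 - y| < 1 := abs_lt.mpr ⟨by linarith [hy.2], by linarith [hy.1]⟩
  have h := (hasDerivAt_Li m h1y (by linarith [hy.2])).comp y ((hasDerivAt_id y).const_sub 1)
  simpa [Function.comp_def] using h

lemma tendsto_Li_zero (m : ℕ) : Tendsto (Li m) (𝓝 0) (𝓝 0) := by
  rw [Li_eq_pseries]
  exact tendsto_pseries_zero (abs_one_div_add_one_pow_le m)

lemma continuousOn_Li {m : ℕ} (hm : 2 ≤ m) : ContinuousOn (Li m) (Icc (-1) 1) := by
  have hu : Summable fun n : ℕ => 1 / ((n : ℝ) + 1) ^ m := by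
    simpa using (summable_nat_add_iff 1).mpr (Real.summable_one_div_nat_pow.mpr hm)
  refine continuousOn_tsum (fun n => (continuous_pow _).div_const _ |>.continuousOn) hu ?_
  intro n x hx
  rw [norm_div, norm_pow, norm_pow, Real.norm_eq_abs, Real.norm_eq_abs,
    abs_of_pos (by positivity : (0 : ℝ) < n + 1)]
  gcongr
  exact pow_le_one₀ (abs_nonneg x) (abs_le.mpr hx)

lemma tendsto_Li_one_sub {m : ℕ} (hm : 2 ≤ m) :
    Tendsto (fun x => Li m (1 - x)) (𝓝[>] 0) (𝓝 (Li m 1)) := by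
  have hsub : Tendsto (fun x : ℝ => 1 - x) (𝓝[>] 0) (𝓝[Icc (-1) 1] 1) := by
    refine tendsto_nhdsWithin_iff.mpr ⟨?_, ?_⟩
    · simpa using (tendsto_const_nhds (x := (1 : ℝ)) |>.sub tendsto_id).mono_left
        (nhdsWithin_le_nhds (a := (0 : ℝ)) (s := Ioi 0))
    · filter_upwards [Ioo_mem_nhdsGT (show (0 : ℝ) < 2 by norm_num)] with x hx
      exact ⟨by linarith [hx.2], by linarith [hx.1]⟩
  exact ((continuousOn_Li hm) 1 ⟨by norm_num, le_rfl⟩).tendsto.comp hsub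

lemma Li_four_one : Li 4 1 = π ^ 4 / 90 := by
  rw [← hasSum_zeta_four.tsum_eq, hasSum_zeta_four.summable.tsum_eq_zero_add]
  simp [Li]

lemma abs_H_pow_le (n p : ℕ) : |H n ^ p| ≤ ((n : ℝ) + 1) ^ p := by
  rw [abs_of_nonneg (pow_nonneg (H_nonneg n) p)]
  exact pow_le_pow_left₀ (H_nonneg n) ((H_le_self n).trans (by linarith)) p

lemma abs_H_succ_pow_div_le (n p j : ℕ) :
    |H (n + 1) ^ p / ((n : ℝ) + 1) ^ j| ≤ ((n : ℝ) + 1) ^ p := by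
  have hH : H (n + 1) ≤ (n : ℝ) + 1 := by exact_mod_cast H_le_self (n + 1)
  rw [abs_of_nonneg (by have := H_nonneg (n + 1); positivity)]
  calc H (n + 1) ^ p / ((n : ℝ) + 1) ^ j ≤ H (n + 1) ^ p :=
        div_le_self (pow_nonneg (H_nonneg _) p) (one_le_pow₀ (by linarith [n.cast_nonneg (α := ℝ)]))
    _ ≤ ((n : ℝ) + 1) ^ p := pow_le_pow_left₀ (H_nonneg _) hH p

lemma pseries_H {x : ℝ} (hx : |x| < 1) :
    pseries (fun n => H (n + 1)) x = -log (1 - x) / (1 - x) := by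
  have h1x : 1 - x ≠ 0 := by linarith [le_abs_self x]
  rw [eq_div_iff h1x, mul_comm,
    one_sub_mul_pseries (k := 1) H_zero (fun n => by simpa using abs_H_pow_le n 1) hx,
    ← Li_one hx, Li_eq_pseries]
  congr 1; ext n; rw [H_succ]; ring

lemma pseries_H_div {x : ℝ} (hx : x ∈ Ioo 0 1) :
    pseries (fun n => H (n + 1) / ((n : ℝ) + 1)) x = Li 2 x + log (1 - x) ^ 2 / 2 := by
  have hH : ∀ n : ℕ, |H (n + 1)| ≤ ((n : ℝ) + 1) ^ 1 := fun n => by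
    simpa using abs_H_succ_pow_div_le n 1 0
  have hH' : ∀ n : ℕ, |H (n + 1) / ((n : ℝ) + 1)| ≤ ((n : ℝ) + 1) ^ 1 := fun n => by
    simpa using abs_H_succ_pow_div_le n 1 1
  refine eqOn_Ioo_of_hasDerivAt_of_tendsto (g := fun y => Li 2 y + log (1 - y) ^ 2 / 2)
    (fun y hy => hasDerivAt_pseries_div_add_one_of_ne_zero hH (abs_lt_one_of_mem_Ioo hy) hy.1.ne')
    (fun y hy => ?_) ((tendsto_pseries_zero hH').mono_left nhdsWithin_le_nhds) ?_ hx
  · have hy1 : y ≠ 1 := hy.2.ne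
    refine ((hasDerivAt_Li 1 (abs_lt_one_of_mem_Ioo hy) hy.1.ne').add
      (((hasDerivAt_log_one_sub hy1).pow 2).div_const 2)).congr_deriv ?_
    rw [pseries_H (abs_lt_one_of_mem_Ioo hy), Li_one (abs_lt_one_of_mem_Ioo hy)]
    field_simp [hy.1.ne', sub_ne_zero.mpr hy1.symm]
    ring
  · simpa using ((tendsto_Li_zero 2).add ((tendsto_log_one_sub.pow 2).div_const 2)).mono_left
      nhdsWithin_le_nhds

lemma pseries_H_sq {x : ℝ} (hx : x ∈ Ioo 0 1) :
    pseries (fun n => H (n + 1) ^ 2) x = (log (1 - x) ^ 2 + Li 2 x) / (1 - x) := by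
  have hx1 := abs_lt_one_of_mem_Ioo hx
  have h1x : 1 - x ≠ 0 := by linarith [hx.2]
  have hdiff : ∀ n : ℕ, H (n + 1) ^ 2 - H n ^ 2
      = 2 * (H (n + 1) / ((n : ℝ) + 1)) - 1 / ((n : ℝ) + 1) ^ 2 := fun n => by
    rw [H_succ]; field_simp; ring
  have hs₁ := summable_mul_pow_succ (a := fun n => H (n + 1) / ((n : ℝ) + 1)) (k := 1)
    (fun n => by simpa using abs_H_succ_pow_div_le n 1 1) hx1
  have hs₂ := summable_mul_pow_succ (abs_one_div_add_one_pow_le 2) hx1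
  rw [eq_div_iff h1x, mul_comm, one_sub_mul_pseries (f := fun n => H n ^ 2) (by simp [H_zero])
    (abs_H_pow_le · 2) hx1,
    show log (1 - x) ^ 2 + Li 2 x = 2 * (Li 2 x + log (1 - x) ^ 2 / 2) - Li 2 x by ring,
    ← pseries_H_div hx, Li_eq_pseries, pseries, pseries, pseries,
    ← tsum_mul_left, ← (hs₁.mul_left 2).tsum_sub hs₂]
  exact tsum_congr fun n => by rw [hdiff]; ring

lemma pseries_H_sq_div {x : ℝ} (hx : x ∈ Ioo 0 1) :
    pseries (fun n => H (n + 1) ^ 2 / ((n : ℝ) + 1)) x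
      = Li 3 x - Li 2 x * log (1 - x) - log (1 - x) ^ 3 / 3 := by
  refine eqOn_Ioo_of_hasDerivAt_of_tendsto
    (g := fun y => Li 3 y - Li 2 y * log (1 - y) - log (1 - y) ^ 3 / 3)
    (fun y hy => hasDerivAt_pseries_div_add_one_of_ne_zero
      (fun n => by simpa using abs_H_succ_pow_div_le n 2 0)
      (abs_lt_one_of_mem_Ioo hy) hy.1.ne')
    (fun y hy => ?_)
    ((tendsto_pseries_zero fun n => by simpa using abs_H_succ_pow_div_le n 2 1).mono_left
      nhdsWithin_le_nhds) ?_ hx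
  · have hy1 : y ≠ 1 := hy.2.ne
    have hy' := abs_lt_one_of_mem_Ioo hy
    refine (((hasDerivAt_Li 2 hy' hy.1.ne').sub ((hasDerivAt_Li 1 hy' hy.1.ne').mul
      (hasDerivAt_log_one_sub hy1))).sub
      (((hasDerivAt_log_one_sub hy1).pow 3).div_const 3)).congr_deriv ?_
    rw [pseries_H_sq hy, Li_one hy']
    field_simp [hy.1.ne', sub_ne_zero.mpr hy1.symm]
    ring
  · simpa using (((tendsto_Li_zero 3).sub ((tendsto_Li_zero 2).mul tendsto_log_one_sub)).sub
      ((tendsto_log_one_sub.pow 3).div_const 3)).mono_left nhdsWithin_le_nhds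

noncomputable def harmonicSqClosedForm (x : ℝ) : ℝ :=
  Li 2 x ^ 2 / 2 - 2 * Li 4 (1 - x) + Li 4 x
    - Li 2 (1 - x) * log (1 - x) ^ 2 + 2 * Li 3 (1 - x) * log (1 - x)
    - (1 / 3) * log x * log (1 - x) ^ 3 + π ^ 4 / 45

lemma hasDerivAt_harmonicSqClosedForm {y : ℝ} (hy : y ∈ Ioo 0 1) :
    HasDerivAt harmonicSqClosedForm
      ((Li 3 y - Li 2 y * log (1 - y) - log (1 - y) ^ 3 / 3) / y) y := by
  have hy0 : y ≠ 0 := hy.1.ne'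
  have hy1 : y ≠ 1 := hy.2.ne
  have hy' := abs_lt_one_of_mem_Ioo hy
  have hlog := hasDerivAt_log_one_sub hy1
  have hd := ((((((((hasDerivAt_Li 1 hy' hy0).pow 2).div_const 2).sub
    ((hasDerivAt_Li_one_sub 3 hy).const_mul 2)).add (hasDerivAt_Li 3 hy' hy0)).sub
    ((hasDerivAt_Li_one_sub 1 hy).mul (hlog.pow 2))).add
    (((hasDerivAt_Li_one_sub 2 hy).const_mul 2).mul hlog)).sub
    (((Real.hasDerivAt_log hy0).const_mul (1 / 3)).mul (hlog.pow 3))).add_const (π ^ 4 / 45)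
  refine (hd.congr_deriv ?_).congr_of_eventuallyEq (.of_forall fun z => by
    simp only [harmonicSqClosedForm, Pi.add_apply, Pi.sub_apply, Pi.mul_apply, Pi.pow_apply])
  have hLi1 : Li 1 (1 - y) = -log y := by
    simpa using Li_one (abs_lt.mpr ⟨by linarith [hy.2], by linarith [hy.1]⟩ : |1 - y| < 1)
  rw [Li_one hy', hLi1, Pi.pow_apply, Pi.pow_apply]
  field_simp [sub_ne_zero.mpr hy1.symm]
  ring

lemma tendsto_harmonicSqClosedForm : Tendsto harmonicSqClosedForm (𝓝[>] 0) (𝓝 0) := by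
  have hLi : ∀ m, Tendsto (Li m) (𝓝[>] 0) (𝓝 0) := fun m =>
    (tendsto_Li_zero m).mono_left nhdsWithin_le_nhds
  have hlog := tendsto_log_one_sub.mono_left (nhdsWithin_le_nhds (s := Ioi 0))
  have h := ((((((((hLi 2).pow 2).div_const 2).sub
    ((tendsto_Li_one_sub (by norm_num : 2 ≤ 4)).const_mul 2)).add (hLi 4)).sub
    ((tendsto_Li_one_sub le_rfl).mul (hlog.pow 2))).add
    (((tendsto_Li_one_sub (by norm_num : 2 ≤ 3)).const_mul 2).mul hlog)).sub
    ((tendsto_log_mul_log_one_sub_pow_succ 2).const_mul (1 / 3))).add_const (π ^ 4 / 45)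
  convert h using 1
  · ext x; simp only [harmonicSqClosedForm]; ring
  · rw [Li_four_one]; ring_nf

/-- Proposition 4 (1): for `0 < x < 1`,
`∑_{n=1}^∞ H_n² xⁿ/n² = Li₂(x)²/2 − 2Li₄(1−x) + Li₄(x) − Li₂(1−x) log²(1−x)
  + 2Li₃(1−x) log(1−x) − (1/3) log x log³(1−x) + π⁴/45`. -/
theorem gen_fun_Hsq (x : ℝ) (hx0 : 0 < x) (hx1 : x < 1) :
    (∑' n : ℕ, (H (n + 1)) ^ 2 * x ^ (n + 1) / ((n : ℝ) + 1) ^ 2)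
      = Li 2 x ^ 2 / 2 - 2 * Li 4 (1 - x) + Li 4 x
        - Li 2 (1 - x) * Real.log (1 - x) ^ 2 + 2 * Li 3 (1 - x) * Real.log (1 - x)
        - (1 / 3) * Real.log x * Real.log (1 - x) ^ 3 + Real.pi ^ 4 / 45 := by
  have hS : (∑' n : ℕ, (H (n + 1)) ^ 2 * x ^ (n + 1) / ((n : ℝ) + 1) ^ 2)
      = pseries (fun n => H (n + 1) ^ 2 / ((n : ℝ) + 1) / ((n : ℝ) + 1)) x :=
    tsum_congr fun n => by dsimp only; rw [div_div, ← sq]; ring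
  rw [hS]
  refine eqOn_Ioo_of_hasDerivAt_of_tendsto (g := harmonicSqClosedForm)
    (fun y hy => hasDerivAt_pseries_div_add_one_of_ne_zero
      (fun n => by simpa using abs_H_succ_pow_div_le n 2 1) (abs_lt_one_of_mem_Ioo hy) hy.1.ne')
    (fun y hy => pseries_H_sq_div hy ▸ hasDerivAt_harmonicSqClosedForm hy)
    ((tendsto_pseries_zero fun n => by simpa [div_div, ← sq] using abs_H_succ_pow_div_le n 2 2)
      |>.mono_left nhdsWithin_le_nhds) tendsto_harmonicSqClosedForm ⟨hx0, hx1⟩
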